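/- arXiv:1506.05756 — 2 statements merged into one kernel-verified Lean document; each statement's English description precedes it below -/
import Mathlib

section
/- Let H be a separable Hilbert space and let B be a self-adjoint nonnegative compact operator on H. For any complex number k with nonzero imaginary part and any ε > 0, if ik/η is not an eigenvalue of εB (where η is a nonzero complex number), then the operator I + (iεη/k)B is invertible, and its inverse has operator norm at most |k/η| / sqrt( (max(Im(k/η),0))² + (Re(k/η))² ) whenever this denominator is nonzero. -/
open ContinuousLinearMap

/-- Compactness lemma: if `1 + c • C` has no coercivity bound, `-c⁻¹` is an eigenvalue of `C`. -/
lemma aux_eig {H : Type*} [NormedAddCommGroup H] [InnerProductSpace ℂ H] [CompleteSpace H]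
    (C : H →L[ℂ] H) (hC : IsCompactOperator C) (c : ℂ) (hc : c ≠ 0)
    (h : ∀ δ : ℝ, 0 < δ → ∃ x : H, ‖((1 : H →L[ℂ] H) + c • C) x‖ < δ * ‖x‖) :
    Module.End.HasEigenvalue (C : H →ₗ[ℂ] H) (-c⁻¹) := by
  set A : H →L[ℂ] H := (1 : H →L[ℂ] H) + c • C with hA
  have hAx : ∀ x : H, A x = x + c • C x := by
    intro x; simp [hA, ContinuousLinearMap.add_apply]
  -- choose unit vectors with small image
  have key : ∀ n : ℕ, ∃ u : H, ‖u‖ = 1 ∧ ‖A u‖ < 1 / (n + 1) := by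
    intro n
    obtain ⟨x, hx⟩ := h (1 / (n + 1)) (by positivity)
    have hx0 : x ≠ 0 := by
      rintro rfl
      simp at hx
    have hxn : (0 : ℝ) < ‖x‖ := norm_pos_iff.mpr hx0
    have hcoe : ‖((‖x‖ : ℂ))⁻¹‖ = ‖x‖⁻¹ := by
      simp
    refine ⟨((‖x‖ : ℂ))⁻¹ • x, ?_, ?_⟩
    · rw [norm_smul, hcoe, inv_mul_cancel₀ hxn.ne']
    · rw [map_smul, norm_smul, hcoe]
      calc ‖x‖⁻¹ * ‖A x‖ < ‖x‖⁻¹ * (1 / (n + 1) * ‖x‖) := by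
            exact mul_lt_mul_of_pos_left hx (inv_pos.mpr hxn)
        _ = 1 / (n + 1) := by field_simp
  choose u hu1 hu2 using key
  have hball : ∀ n, C (u n) ∈ closure (C '' Metric.closedBall 0 1) :=
    fun n => subset_closure ⟨u n, by simp [hu1 n], rfl⟩
  have hcpt : IsCompact (closure (C '' Metric.closedBall 0 1)) := by
    have := hC.isCompact_closure_image_closedBall (𝕜₁ := ℂ) (1 : ℝ)
    simpa using this
  obtain ⟨y, -, φ, hφ, hy⟩ := hcpt.tendsto_subseq hball
  have hA0 : Filter.Tendsto (fun n => A (u (φ n))) Filter.atTop (nhds 0) := by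
    apply squeeze_zero_norm (fun n => (hu2 (φ n)).le)
    have h1 : Filter.Tendsto (fun n : ℕ => 1 / ((n : ℝ) + 1)) Filter.atTop (nhds 0) :=
      tendsto_one_div_add_atTop_nhds_zero_nat
    exact h1.comp (hφ.tendsto_atTop.comp tendsto_natCast_atTop_atTop) |>.congr (by simp)
  have hulim : Filter.Tendsto (fun n => u (φ n)) Filter.atTop (nhds (-(c • y))) := by
    have : ∀ n, u (φ n) = A (u (φ n)) - c • C (u (φ n)) := by
      intro n; rw [hAx]; abel
    rw [show -(c • y) = 0 - c • y by abel]
    exact Filter.Tendsto.congr (fun n => (this n).symm) (hA0.sub (hy.const_smul c))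
  set z := -(c • y) with hz
  have hz1 : ‖z‖ = 1 := by
    have := (continuous_norm.tendsto z).comp hulim
    have h2 : Filter.Tendsto (fun n => ‖u (φ n)‖) Filter.atTop (nhds 1) := by
      simpa [hu1] using tendsto_const_nhds (α := ℝ) (x := 1) (f := Filter.atTop (α := ℕ))
    exact tendsto_nhds_unique (this.congr fun n => rfl) h2
  have hz0 : z ≠ 0 := by intro h0; rw [h0, norm_zero] at hz1; norm_num at hz1
  have hCz : C z = y := by
    have h1 : Filter.Tendsto (fun n => C (u (φ n))) Filter.atTop (nhds (C z)) :=
      (C.continuous.tendsto z).comp hulim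
    exact tendsto_nhds_unique h1 hy
  have heq : C z = (-c⁻¹) • z := by
    rw [hCz, hz, smul_neg, neg_smul, neg_neg, smul_smul, inv_mul_cancel₀ hc, one_smul]
  exact Module.End.hasEigenvalue_of_hasEigenvector
    ⟨Module.End.mem_eigenspace_iff.mpr (by simpa using heq), hz0⟩

/-- Scaling eigenvalues. -/
lemma aux_smul_eig {H : Type*} [NormedAddCommGroup H] [InnerProductSpace ℂ H]
    (B : H →L[ℂ] H) (a μ : ℂ)
    (h : Module.End.HasEigenvalue (B : H →ₗ[ℂ] H) μ) :
    Module.End.HasEigenvalue ((a • B : H →L[ℂ] H) : H →ₗ[ℂ] H) (a * μ) := by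
  obtain ⟨v, hv, hv0⟩ := h.exists_hasEigenvector
  refine Module.End.hasEigenvalue_of_hasEigenvector ⟨Module.End.mem_eigenspace_iff.mpr ?_, hv0⟩
  have hBv : B v = μ • v := by simpa using Module.End.mem_eigenspace_iff.mp hv
  have h2 : (a • B) v = (a * μ) • v := by
    simp [hBv, smul_smul]
  simpa using h2

/-- The scalar estimate. -/
lemma aux_abs (w : ℂ) (hw : w ≠ 0) (N t e : ℝ) (hN : 0 ≤ N) (ht : 0 ≤ t) (he : 0 ≤ e) :
    Real.sqrt (max w.im 0 ^ 2 + w.re ^ 2) / ‖w‖ * N ≤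
      ‖(N : ℂ) + Complex.I * e / w * t‖ := by
  have hwabs : (0 : ℝ) < ‖w‖ := by
    simpa using hw
  have hrw : (N : ℂ) + Complex.I * e / w * t = ((N : ℂ) * w + Complex.I * e * t) / w := by
    field_simp
  rw [hrw, norm_div, div_mul_eq_mul_div]
  gcongr
  set z : ℂ := (N : ℂ) * w + Complex.I * e * t with hzdef
  have hzre : z.re = N * w.re := by simp [hzdef]
  have hzim : z.im = N * w.im + e * t := by simp [hzdef]
  have hs : 0 ≤ max w.im 0 ^ 2 + w.re ^ 2 := by positivity
  have hsq : (Real.sqrt (max w.im 0 ^ 2 + w.re ^ 2) * N) ^ 2 ≤ ‖z‖ ^ 2 := by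
    rw [Complex.sq_norm, Complex.normSq_apply, mul_pow, Real.sq_sqrt hs, hzre, hzim]
    rcases le_or_gt w.im 0 with hb | hb
    · rw [max_eq_right hb]; nlinarith [mul_nonneg (mul_nonneg hN (neg_nonneg.mpr hb)) (mul_nonneg he ht)]
    · rw [max_eq_left hb.le]; nlinarith [mul_nonneg (mul_nonneg hN hb.le) (mul_nonneg he ht)]
  have h1 : 0 ≤ Real.sqrt (max w.im 0 ^ 2 + w.re ^ 2) * N :=
    mul_nonneg (Real.sqrt_nonneg _) hN
  calc Real.sqrt (max w.im 0 ^ 2 + w.re ^ 2) * N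
      = Real.sqrt ((Real.sqrt (max w.im 0 ^ 2 + w.re ^ 2) * N) ^ 2) := (Real.sqrt_sq h1).symm
    _ ≤ Real.sqrt (‖z‖ ^ 2) := Real.sqrt_le_sqrt hsq
    _ = ‖z‖ := Real.sqrt_sq (norm_nonneg z)

/-- Coercivity from the scalar estimate. -/
lemma aux_lower {H : Type*} [NormedAddCommGroup H] [InnerProductSpace ℂ H] [CompleteSpace H]
    (B : H →L[ℂ] H) (hBsym : (B : H →ₗ[ℂ] H).IsSymmetric) (hBpos : B.IsPositive)
    (c : ℂ) (d : ℝ)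
    (hd : ∀ N t : ℝ, 0 ≤ N → 0 ≤ t → d * N ≤ ‖(N : ℂ) + c * t‖) (x : H) :
    d * ‖x‖ ≤ ‖((1 : H →L[ℂ] H) + c • B) x‖ := by
  rcases eq_or_ne x 0 with rfl | hx0
  · simp
  have hxn : (0 : ℝ) < ‖x‖ := norm_pos_iff.mpr hx0
  set A : H →L[ℂ] H := (1 : H →L[ℂ] H) + c • B with hA
  set s : ℝ := B.reApplyInnerSelf x with hs
  have hs0 : 0 ≤ s := hBpos.2 x
  have hsr : (inner ℂ x (B x) : ℂ) = (s : ℂ) := by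
    rw [← inner_conj_symm, ← hBsym.coe_reApplyInnerSelf_apply x, RCLike.conj_ofReal]
    rfl
  have hinner : (inner ℂ x (A x) : ℂ) = ((‖x‖ ^ 2 : ℝ) : ℂ) + c * s := by
    have h1 : A x = x + c • B x := by simp [hA, ContinuousLinearMap.add_apply]
    rw [h1, inner_add_right, inner_smul_right, hsr, inner_self_eq_norm_sq_to_K]
    norm_cast
  have hstep : d * ‖x‖ ^ 2 ≤ ‖(inner ℂ x (A x) : ℂ)‖ := by
    rw [hinner]; exact hd (‖x‖ ^ 2) s (by positivity) hs0
  have hcs : ‖(inner ℂ x (A x) : ℂ)‖ ≤ ‖x‖ * ‖A x‖ := by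
    simpa using norm_inner_le_norm (𝕜 := ℂ) x (A x)
  have : d * ‖x‖ * ‖x‖ ≤ ‖A x‖ * ‖x‖ := by
    calc d * ‖x‖ * ‖x‖ = d * ‖x‖ ^ 2 := by ring
      _ ≤ ‖x‖ * ‖A x‖ := hstep.trans hcs
      _ = ‖A x‖ * ‖x‖ := by ring
  exact le_of_mul_le_mul_right this hxn

/-- For a self-adjoint nonnegative compact operator `B` on a separable
Hilbert space, `η ≠ 0`, `ε > 0` and `k` with nonzero imaginary part, if `i k / η` is not
an eigenvalue of `ε B`, then `I + (i ε η / k) • B` is invertible and the norm of its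
inverse is bounded by `|k/η| / √((Im(k/η))₊² + (Re(k/η))²)` whenever the denominator
is nonzero. -/
theorem stmt_0 {H : Type*} [NormedAddCommGroup H] [InnerProductSpace ℂ H]
    [CompleteSpace H] [TopologicalSpace.SeparableSpace H]
    (B : H →L[ℂ] H) (hBsa : IsSelfAdjoint B) (hBpos : B.IsPositive)
    (hBcpt : IsCompactOperator B)
    (k η : ℂ) (hk : k.im ≠ 0) (hη : η ≠ 0) (ε : ℝ) (hε : 0 < ε)
    (heig : ¬ Module.End.HasEigenvalue
      ((((ε : ℂ) • B : H →L[ℂ] H)) : H →ₗ[ℂ] H) (Complex.I * k / η)) :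
    ∃ T : H →L[ℂ] H,
      ((1 : H →L[ℂ] H) + (Complex.I * (ε : ℂ) * η / k) • B) * T = 1 ∧
      T * ((1 : H →L[ℂ] H) + (Complex.I * (ε : ℂ) * η / k) • B) = 1 ∧
      (Real.sqrt (max (k / η).im 0 ^ 2 + (k / η).re ^ 2) ≠ 0 →
        ‖T‖ ≤ ‖k / η‖ /
          Real.sqrt (max (k / η).im 0 ^ 2 + (k / η).re ^ 2)) := by
  have hk0 : k ≠ 0 := fun h => hk (by simp [h])
  have hε0 : (ε : ℂ) ≠ 0 := by exact_mod_cast hε.ne'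
  set c : ℂ := Complex.I * (ε : ℂ) * η / k with hc
  have hcne : c ≠ 0 := by
    simp only [hc, div_ne_zero_iff, mul_ne_zero_iff]
    exact ⟨⟨⟨Complex.I_ne_zero, hε0⟩, hη⟩, hk0⟩
  have hBsym : (B : H →ₗ[ℂ] H).IsSymmetric := hBsa.isSymmetric
  -- the eigenvalue computation
  have hεc : (ε : ℂ) * (-c⁻¹) = Complex.I * k / η := by
    rw [hc]
    field_simp
    ring_nf
    simp [Complex.I_sq]
  set A : H →L[ℂ] H := (1 : H →L[ℂ] H) + c • B with hA
  set A' : H →L[ℂ] H := (1 : H →L[ℂ] H) + (starRingEnd ℂ c) • B with hA'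
  -- coercivity of A
  have hlow : ∃ δ : ℝ, 0 < δ ∧ ∀ x, δ * ‖x‖ ≤ ‖A x‖ := by
    by_contra hcon
    push_neg at hcon
    have h' : ∀ δ : ℝ, 0 < δ → ∃ x : H, ‖A x‖ < δ * ‖x‖ := by
      intro δ hδ
      obtain ⟨x, hx⟩ := hcon δ hδ
      exact ⟨x, hx⟩
    have := aux_eig B hBcpt c hcne h'
    exact heig (by rw [← hεc]; exact aux_smul_eig B (ε : ℂ) (-c⁻¹) this)
  -- coercivity of A'
  have hlow' : ∃ δ : ℝ, 0 < δ ∧ ∀ x, δ * ‖x‖ ≤ ‖A' x‖ := by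
    by_contra hcon
    push_neg at hcon
    have h' : ∀ δ : ℝ, 0 < δ → ∃ x : H, ‖A' x‖ < δ * ‖x‖ := by
      intro δ hδ
      obtain ⟨x, hx⟩ := hcon δ hδ
      exact ⟨x, hx⟩
    have h1 := aux_eig B hBcpt (starRingEnd ℂ c) (by simpa using hcne) h'
    have h2 := hBsym.conj_eigenvalue_eq_self h1
    have h3 : (starRingEnd ℂ) (-((starRingEnd ℂ c))⁻¹) = -c⁻¹ := by
      simp
    rw [h3] at h2
    rw [← h2] at h1
    exact heig (by rw [← hεc]; exact aux_smul_eig B (ε : ℂ) (-c⁻¹) h1)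
  obtain ⟨δ, hδ, hδA⟩ := hlow
  obtain ⟨δ', hδ', hδA'⟩ := hlow'
  -- A' is "adjoint" of A
  have hadj : ∀ x y : H, (inner ℂ (A x) y : ℂ) = inner ℂ x (A' y) := by
    intro x y
    have h1 : A x = x + c • B x := by simp [hA, ContinuousLinearMap.add_apply]
    have h2 : A' y = y + (starRingEnd ℂ c) • B y := by
      simp [hA', ContinuousLinearMap.add_apply]
    rw [h1, h2, inner_add_left, inner_add_right, inner_smul_left, inner_smul_right]
    have hs := hBsym x y
    simp only [ContinuousLinearMap.coe_coe] at hs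
    rw [hs]
  -- injectivity
  have hker : A.ker = ⊥ := by
    rw [LinearMap.ker_eq_bot']
    intro x hx
    have := hδA x
    rw [show A x = 0 from hx, norm_zero] at this
    have : ‖x‖ ≤ 0 := by nlinarith
    exact norm_le_zero_iff.mp this
  -- closed range
  have hanti : AntilipschitzWith (Real.toNNReal δ⁻¹) A := by
    apply ContinuousLinearMap.antilipschitz_of_bound
    intro x
    rw [Real.coe_toNNReal _ (by positivity)]
    calc ‖x‖ = δ⁻¹ * (δ * ‖x‖) := by field_simp
      _ ≤ δ⁻¹ * ‖A x‖ := mul_le_mul_of_nonneg_left (hδA x) (by positivity)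
  have hclosed : IsClosed (A.range : Set H) :=
    hanti.isClosed_range A.uniformContinuous
  -- surjectivity
  have hrange : A.range = ⊤ := by
    haveI : CompleteSpace (A.range) := hclosed.completeSpace_coe
    haveI : Submodule.HasOrthogonalProjection (A.range) :=
      Submodule.HasOrthogonalProjection.ofCompleteSpace _
    rw [← Submodule.orthogonal_eq_bot_iff]
    rw [Submodule.eq_bot_iff]
    intro y hy
    have hAy : A' y = 0 := by
      have h0 : (inner ℂ (A' y) (A' y) : ℂ) = 0 := by
        rw [← hadj (A' y) y]
        exact hy (A (A' y)) ⟨A' y, rfl⟩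
      exact inner_self_eq_zero.mp h0
    have := hδA' y
    rw [hAy, norm_zero] at this
    have : ‖y‖ ≤ 0 := by nlinarith
    exact norm_le_zero_iff.mp this
  set e := ContinuousLinearEquiv.ofBijective A hker hrange with he
  have hecoe : ∀ x, e x = A x := fun x =>
    congrFun (ContinuousLinearEquiv.coeFn_ofBijective A hker hrange) x
  refine ⟨(e.symm : H →L[ℂ] H), ?_, ?_, ?_⟩
  · ext y
    simp only [ContinuousLinearMap.mul_apply, ContinuousLinearMap.one_apply,
      ContinuousLinearEquiv.coe_coe]
    rw [← hecoe]
    exact e.apply_symm_apply y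
  · ext y
    simp only [ContinuousLinearMap.mul_apply, ContinuousLinearMap.one_apply,
      ContinuousLinearEquiv.coe_coe]
    rw [← hecoe]
    exact e.symm_apply_apply y
  · intro hden
    set w : ℂ := k / η with hw
    have hwne : w ≠ 0 := div_ne_zero hk0 hη
    have hwabs : (0 : ℝ) < ‖w‖ := by simpa using hwne
    set d : ℝ := Real.sqrt (max w.im 0 ^ 2 + w.re ^ 2) / ‖w‖ with hd
    have hsqrt0 : 0 < Real.sqrt (max w.im 0 ^ 2 + w.re ^ 2) :=
      lt_of_le_of_ne (Real.sqrt_nonneg _) (Ne.symm hden)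
    have hd0 : 0 < d := div_pos hsqrt0 hwabs
    have hcw : c = Complex.I * (ε : ℂ) / w := by
      rw [hc, hw]; field_simp
    have hdbound : ∀ N t : ℝ, 0 ≤ N → 0 ≤ t → d * N ≤ ‖(N : ℂ) + c * t‖ := by
      intro N t hN ht
      rw [hcw]
      exact aux_abs w hwne N t ε hN ht hε.le
    have hAbd : ∀ x, d * ‖x‖ ≤ ‖A x‖ := aux_lower B hBsym hBpos c d hdbound
    apply ContinuousLinearMap.opNorm_le_bound _ (by positivity)
    intro y
    have h1 : d * ‖(e.symm : H →L[ℂ] H) y‖ ≤ ‖y‖ := by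
      have := hAbd (e.symm y)
      rwa [← hecoe, e.apply_symm_apply] at this
    rw [hd] at h1
    have : ‖(e.symm : H →L[ℂ] H) y‖ ≤ ‖y‖ / d := by
      rw [le_div_iff₀ hd0]; linarith [h1]
    calc ‖(e.symm : H →L[ℂ] H) y‖ ≤ ‖y‖ / d := this
      _ = ‖w‖ / Real.sqrt (max w.im 0 ^ 2 + w.re ^ 2) * ‖y‖ := by
          rw [hd]; field_simp
end

section
/- Let δ > 0 and define the sector C_δ := { k ∈ ℂ : −δ·Im(k) ≤ |Re(k)| }. Let B be a self-adjoint nonnegative bounded operator on a Hilbert space, η ∈ ℂ \ {0}, and ε > 0. Then for every k ∈ η·C_δ with k ≠ 0 and ik η⁻¹ ∉ σ(εB), the operator I + (iεη/k)B is invertible with ‖(I + (iεη/k)B)⁻¹‖ ≤ sqrt(1 + δ⁻²). -/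
lemma aux_ineq_stmt1 (δ c t a r q : ℝ) (hδ : 0 < δ) (ha0 : 0 ≤ a) (hact : a ≤ c * t)
    (hc : 0 ≤ c) (ht : 0 ≤ t) (hsec : -δ * r ≤ |q|) :
    c ^ 2 ≤ (1 + δ⁻¹ ^ 2) * (c ^ 2 + 2 * (r * a) + (r ^ 2 + q ^ 2) * t ^ 2) := by
  have hd : δ ^ 2 * δ⁻¹ ^ 2 = 1 := by
    rw [← mul_pow, mul_inv_cancel₀ hδ.ne', one_pow]
  rcases le_or_gt 0 r with hr | hr
  · nlinarith [mul_nonneg hr ha0, sq_nonneg (δ⁻¹), sq_nonneg r, sq_nonneg q, sq_nonneg t,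
      mul_nonneg (mul_nonneg hr ha0) (sq_nonneg δ⁻¹), sq_nonneg (r*t), sq_nonneg (q*t),
      mul_nonneg (sq_nonneg (r*t)) (sq_nonneg δ⁻¹), mul_nonneg (sq_nonneg (q*t)) (sq_nonneg δ⁻¹)]
  · have h0 : 0 ≤ -δ * r := by nlinarith [mul_pos hδ (neg_pos.mpr hr)]
    have hq2 : δ ^ 2 * r ^ 2 ≤ q ^ 2 := by
      have := mul_self_le_mul_self h0 hsec
      rw [abs_mul_abs_self] at this; nlinarith [this]
    have hra : r * (c * t) ≤ r * a := by nlinarith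
    have hs : 0 < r ^ 2 + q ^ 2 := by
      nlinarith [sq_nonneg q, mul_pos (neg_pos.mpr hr) (neg_pos.mpr hr)]
    have key : δ ^ 2 * c ^ 2 * (r ^ 2 + q ^ 2) ≤
        (δ ^ 2 + 1) * (c ^ 2 + 2 * (r * a) + (r ^ 2 + q ^ 2) * t ^ 2) * (r ^ 2 + q ^ 2) := by
      nlinarith [mul_nonneg (by positivity : (0:ℝ) ≤ δ^2+1) (sq_nonneg ((r^2+q^2)*t + r*c)),
        mul_le_mul_of_nonneg_left hq2 (sq_nonneg c),
        mul_le_mul_of_nonneg_left hra (by positivity : (0:ℝ) ≤ 2*((δ^2+1)*(r^2+q^2)))]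
    have key2 : δ ^ 2 * c ^ 2 ≤ (δ ^ 2 + 1) * (c ^ 2 + 2 * (r * a) + (r ^ 2 + q ^ 2) * t ^ 2) :=
      le_of_mul_le_mul_right key hs
    nlinarith [mul_le_mul_of_nonneg_left key2 (sq_nonneg δ⁻¹), hd]

lemma aux_norm_stmt1 {H : Type*} [NormedAddCommGroup H] [InnerProductSpace ℂ H] [CompleteSpace H]
    (B : H →L[ℂ] H) (hBsa : IsSelfAdjoint B) (hBpos : B.IsPositive)
    (δ : ℝ) (hδ : 0 < δ) (z : ℂ) (hsec : -δ * z.re ≤ |z.im|) (x : H) :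
    ‖x‖ ≤ Real.sqrt (1 + δ⁻¹ ^ 2) * ‖x + z • B x‖ := by
  have him : (inner ℂ x (B x) : ℂ).im = 0 := by
    have h1 : (inner ℂ (B x) x : ℂ) = inner ℂ x (B x) := by
      rw [← ContinuousLinearMap.adjoint_inner_left, hBsa.adjoint_eq]
    have h2 : (starRingEnd ℂ) (inner ℂ x (B x) : ℂ) = inner ℂ x (B x) := by
      rw [← inner_conj_symm] at h1 ⊢
      simpa using congrArg (starRingEnd ℂ) h1.symm
    exact Complex.conj_eq_iff_im.mp h2
  have ha0 : 0 ≤ (inner ℂ x (B x) : ℂ).re := hBpos.re_inner_nonneg_right x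
  have hact : (inner ℂ x (B x) : ℂ).re ≤ ‖x‖ * ‖B x‖ := by
    calc (inner ℂ x (B x) : ℂ).re ≤ ‖(inner ℂ x (B x) : ℂ)‖ := Complex.re_le_norm _
    _ ≤ ‖x‖ * ‖B x‖ := norm_inner_le_norm x (B x)
  have expand : ‖x + z • B x‖ ^ 2 =
      ‖x‖ ^ 2 + 2 * (z.re * (inner ℂ x (B x) : ℂ).re) + (z.re ^ 2 + z.im ^ 2) * ‖B x‖ ^ 2 := by
    rw [@norm_add_sq ℂ, inner_smul_right, norm_smul]
    simp only [RCLike.re_to_complex]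
    rw [Complex.mul_re, him]
    simp
    rw [mul_pow, Complex.sq_norm, Complex.normSq_apply]
    ring
  have hsq : ‖x‖ ^ 2 ≤ (1 + δ⁻¹ ^ 2) * ‖x + z • B x‖ ^ 2 := by
    rw [expand]
    exact aux_ineq_stmt1 δ ‖x‖ ‖B x‖ _ z.re z.im hδ ha0 hact (norm_nonneg x) (norm_nonneg _) hsec
  calc ‖x‖ = Real.sqrt (‖x‖ ^ 2) := (Real.sqrt_sq (norm_nonneg x)).symm
  _ ≤ Real.sqrt ((1 + δ⁻¹ ^ 2) * ‖x + z • B x‖ ^ 2) := Real.sqrt_le_sqrt hsq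
  _ = Real.sqrt (1 + δ⁻¹ ^ 2) * ‖x + z • B x‖ := by
      rw [Real.sqrt_mul (by positivity), Real.sqrt_sq (norm_nonneg _)]

/-- For `δ > 0` and the sector `C_δ = {k : −δ Im k ≤ |Re k|}`,
a self-adjoint nonnegative bounded operator `B`, `η ≠ 0` and `ε > 0`: for every
`k ∈ η • C_δ`, `k ≠ 0`, with `i k η⁻¹ ∉ σ(ε B)`, the operator `I + (i ε η / k) • B`
is invertible with inverse of norm at most `√(1 + δ⁻²)`. -/
theorem stmt_1 {H : Type*} [NormedAddCommGroup H] [InnerProductSpace ℂ H]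
    [CompleteSpace H] [TopologicalSpace.SeparableSpace H]
    (B : H →L[ℂ] H) (hBsa : IsSelfAdjoint B) (hBpos : B.IsPositive)
    (η : ℂ) (hη : η ≠ 0) (ε : ℝ) (hε : 0 < ε) (δ : ℝ) (hδ : 0 < δ)
    (k : ℂ) (hk : k ≠ 0)
    (hsector : ∃ w : ℂ, -δ * w.im ≤ |w.re| ∧ k = η * w)
    (hspec : Complex.I * k * η⁻¹ ∉ spectrum ℂ ((ε : ℂ) • B)) :
    ∃ T : H →L[ℂ] H,
      ((1 : H →L[ℂ] H) + (Complex.I * (ε : ℂ) * η / k) • B) * T = 1 ∧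
      T * ((1 : H →L[ℂ] H) + (Complex.I * (ε : ℂ) * η / k) • B) = 1 ∧
      ‖T‖ ≤ Real.sqrt (1 + δ⁻¹ ^ 2) := by
  have hεC : (ε:ℂ) ≠ 0 := by exact_mod_cast hε.ne'
  have hμ : Complex.I * k * η⁻¹ ≠ 0 := by simp [Complex.I_ne_zero, hk, hη]
  set z : ℂ := Complex.I * (ε : ℂ) * η / k with hzdef
  -- sector condition on z
  obtain ⟨w, hw1, hw2⟩ := hsector
  have hwne : w ≠ 0 := by rintro rfl; exact hk (by simp [hw2])
  have hzsec : -δ * z.re ≤ |z.im| := by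
    have hzw : z = Complex.I * (ε:ℂ) / w := by
      rw [hzdef, hw2]; field_simp
    rw [hzw]
    have hns : 0 < Complex.normSq w := Complex.normSq_pos.mpr hwne
    have hre : (Complex.I * (ε:ℂ) / w).re = ε * w.im / Complex.normSq w := by
      simp [Complex.div_re, Complex.mul_re, Complex.mul_im]
    have him : (Complex.I * (ε:ℂ) / w).im = ε * w.re / Complex.normSq w := by
      simp [Complex.div_im, Complex.mul_re, Complex.mul_im]
    rw [hre, him, abs_div, abs_of_pos hns, abs_mul, abs_of_pos hε]
    rw [show -δ * (ε * w.im / Complex.normSq w) = -δ * (ε * w.im) / Complex.normSq w from by ring,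
      div_le_div_iff₀ hns hns]
    nlinarith [mul_le_mul_of_nonneg_left hw1 (le_of_lt (mul_pos hε hns))]
  -- the operator equals a scalar multiple of the spectral unit
  have heq : (1 : H →L[ℂ] H) + z • B =
      (Complex.I * k * η⁻¹)⁻¹ • ((algebraMap ℂ (H →L[ℂ] H)) (Complex.I * k * η⁻¹) - (ε:ℂ) • B) := by
    rw [Algebra.algebraMap_eq_smul_one, smul_sub, smul_smul, smul_smul,
      inv_mul_cancel₀ hμ, one_smul, sub_eq_add_neg, ← neg_smul]
    congr 1
    rw [hzdef, div_eq_mul_inv]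
    field_simp
    ring_nf
    simp [Complex.I_sq]
    ring
  obtain ⟨u, hu⟩ := spectrum.notMem_iff.mp hspec
  refine ⟨(Complex.I * k * η⁻¹) • (↑u⁻¹ : H →L[ℂ] H), ?_, ?_, ?_⟩
  · rw [heq, smul_mul_smul, inv_mul_cancel₀ hμ, one_smul, ← hu]
    exact_mod_cast u.mul_inv
  · rw [heq, smul_mul_smul, mul_comm, inv_mul_cancel₀ hμ, one_smul, ← hu]
    exact_mod_cast u.inv_mul
  · have h1 : ((1 : H →L[ℂ] H) + z • B) * ((Complex.I * k * η⁻¹) • (↑u⁻¹ : H →L[ℂ] H)) = 1 := by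
      rw [heq, smul_mul_smul, inv_mul_cancel₀ hμ, one_smul, ← hu]
      exact_mod_cast u.mul_inv
    set T : H →L[ℂ] H := (Complex.I * k * η⁻¹) • (↑u⁻¹ : H →L[ℂ] H) with hT
    refine ContinuousLinearMap.opNorm_le_bound _ (Real.sqrt_nonneg _) fun y => ?_
    have hxy : T y + z • B (T y) = y := by
      have := congrArg (fun A : H →L[ℂ] H => A y) h1
      simpa [ContinuousLinearMap.mul_apply] using this
    calc ‖T y‖ ≤ Real.sqrt (1 + δ⁻¹ ^ 2) * ‖T y + z • B (T y)‖ :=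
          aux_norm_stmt1 B hBsa hBpos δ hδ z hzsec (T y)
    _ = Real.sqrt (1 + δ⁻¹ ^ 2) * ‖y‖ := by rw [hxy]
end
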